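/- Let i, j ∈ ℕ with j ≤ i and set (r, r′) = (−ρ−2i, −ρ′−2j), so (r, r′) ∈ L. Then the ℂ-vector space of diagonal families for (r, r′) has dimension 4. -/

import Mathlib

noncomputable section

/-- A diagonal family for `(r, r')` (case of unitary groups, ρ = n, ρ' = n−1):
(D1): `(r'+2q₁+n−1)·s(q₁,q₂) = (r+2q₁+n)·s(q₁+1,q₂)` and
(D2): `(r'+2q₂+n−1)·s(q₁,q₂) = (r+2q₂+n)·s(q₁,q₂+1)` for all `q₁, q₂ ∈ ℕ`. -/
def IsDiagFam (n : ℕ) (r r' : ℂ) (s : ℕ → ℕ → ℂ) : Prop :=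
  ∀ q₁ q₂ : ℕ,
    (r' + 2*(q₁ : ℂ) + (n : ℂ) - 1) * s q₁ q₂ = (r + 2*(q₁ : ℂ) + (n : ℂ)) * s (q₁ + 1) q₂ ∧
    (r' + 2*(q₂ : ℂ) + (n : ℂ) - 1) * s q₁ q₂ = (r + 2*(q₂ : ℂ) + (n : ℂ)) * s q₁ (q₂ + 1)

/-- The ℂ-vector space of diagonal families for `(r, r')`. -/
def diagFamSub (n : ℕ) (r r' : ℂ) : Submodule ℂ (ℕ → ℕ → ℂ) where
  carrier := {s | IsDiagFam n r r' s}
  add_mem' := by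
    intro a b ha hb q₁ q₂
    constructor
    · simp only [Pi.add_apply]
      linear_combination (ha q₁ q₂).1 + (hb q₁ q₂).1
    · simp only [Pi.add_apply]
      linear_combination (ha q₁ q₂).2 + (hb q₁ q₂).2
  zero_mem' := by
    intro q₁ q₂
    constructor <;> simp
  smul_mem' := by
    intro c s hs q₁ q₂
    constructor
    · simp only [Pi.smul_apply, smul_eq_mul]
      linear_combination c * (hs q₁ q₂).1
    · simp only [Pi.smul_apply, smul_eq_mul]
      linear_combination c * (hs q₁ q₂).2

/-- L = {(−ρ−2i, −ρ′−2j) : i, j ∈ ℕ, j ≤ i}, with ρ = n, ρ' = n−1. -/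
def LC (n : ℕ) : Set (ℂ × ℂ) :=
  {p | ∃ i j : ℕ, j ≤ i ∧ p.1 = -(n : ℂ) - 2*(i : ℂ) ∧ p.2 = -((n : ℂ) - 1) - 2*(j : ℂ)}

/-!
At a point `(r, r') = (-n - 2i, -(n - 1) - 2j)` of `L`, both (D1) and (D2) become the recurrence
`(q - j) f q = (q - i) f (q + 1)`, in `q₁` and in `q₂` separately. Its coefficient `q - i` vanishes
only at `q = i`, where `j ≤ i` makes the recurrence consistent, so a one-variable solution is
determined freely by its values at `0` and `i + 1`. Diagonal families are the functions whose rows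
and columns are such solutions, hence are determined freely by their values on `{0, i + 1}²`.
-/

open Finset Module

section RowCol

variable {K α ι : Type*} [Field K]

def rowColSub (V : Submodule K (α → K)) : Submodule K (α → α → K) where
  carrier := {s | (∀ y, (fun x => s x y) ∈ V) ∧ ∀ x, s x ∈ V}
  add_mem' := fun ⟨hc, hr⟩ ⟨hc', hr'⟩ =>
    ⟨fun y => V.add_mem (hc y) (hc' y), fun x => V.add_mem (hr x) (hr' x)⟩
  zero_mem' := ⟨fun _ => V.zero_mem, fun _ => V.zero_mem⟩
  smul_mem' c _ := fun ⟨hc, hr⟩ => ⟨fun y => V.smul_mem c (hc y), fun x => V.smul_mem c (hr x)⟩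

variable {V : Submodule K (α → K)}

theorem mul_mem_rowColSub {f g : α → K} (hf : f ∈ V) (hg : g ∈ V) :
    (fun x y => f x * g y) ∈ rowColSub V := by
  refine ⟨fun y => ?_, fun x => ?_⟩
  · convert V.smul_mem (g y) hf using 1
    funext x
    exact mul_comm _ _
  · exact V.smul_mem (f x) hg

def evalGrid (p : ι → α) : (α → α → K) →ₗ[K] (ι × ι → K) where
  toFun s ab := s (p ab.1) (p ab.2)
  map_add' _ _ := rfl
  map_smul' _ _ := rfl

theorem eq_zero_of_evalGrid_eq_zero {p : ι → α} (hV : ∀ f ∈ V, (∀ a, f (p a) = 0) → f = 0)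
    {s : α → α → K} (hs : s ∈ rowColSub V) (h0 : evalGrid p s = 0) : s = 0 := by
  have hcol : ∀ x b, s x (p b) = 0 := fun x b =>
    congrFun (hV _ (hs.1 (p b)) fun a => congrFun h0 (a, b)) x
  funext x
  exact hV _ (hs.2 x) (hcol x)

theorem exists_mem_rowColSub_evalGrid_eq [Fintype ι] [DecidableEq ι] {p : ι → α}
    {g : ι → α → K} (hg : ∀ a, g a ∈ V) (hgp : ∀ a b, g a (p b) = if a = b then 1 else 0)
    (v : ι × ι → K) : ∃ s ∈ rowColSub V, evalGrid p s = v := by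
  refine ⟨∑ a, ∑ b, v (a, b) • fun x y => g a x * g b y, ?_, ?_⟩
  · exact Submodule.sum_mem _ fun a _ => Submodule.sum_mem _ fun b _ =>
      Submodule.smul_mem _ _ (mul_mem_rowColSub (hg a) (hg b))
  · funext ab
    simp [evalGrid, Finset.sum_apply, hgp]

theorem finrank_rowColSub [Fintype ι] [DecidableEq ι] (p : ι → α) (g : ι → α → K)
    (hV : ∀ f ∈ V, (∀ a, f (p a) = 0) → f = 0) (hg : ∀ a, g a ∈ V)
    (hgp : ∀ a b, g a (p b) = if a = b then 1 else 0) :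
    finrank K (rowColSub V) = Fintype.card ι ^ 2 := by
  let E := (evalGrid p).comp (rowColSub V).subtype
  have hinj : Function.Injective E := by
    refine (injective_iff_map_eq_zero E).2 fun s hs => ?_
    exact Subtype.ext (eq_zero_of_evalGrid_eq_zero hV s.2 hs)
  have hsurj : Function.Surjective E := fun v => by
    obtain ⟨s, hs, hsv⟩ := exists_mem_rowColSub_evalGrid_eq hg hgp v
    exact ⟨⟨s, hs⟩, hsv⟩
  rw [(LinearEquiv.ofBijective E ⟨hinj, hsurj⟩).finrank_eq, finrank_fintype_fun_eq_card,
    Fintype.card_prod, sq]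

end RowCol

section Recurrence

variable (K : Type*) [Field K] [CharZero K] (i j : ℕ)

def recSub : Submodule K (ℕ → K) where
  carrier := {f | ∀ q : ℕ, ((q : K) - j) * f q = ((q : K) - i) * f (q + 1)}
  add_mem' hf hg q := by simp only [Pi.add_apply]; linear_combination hf q + hg q
  zero_mem' q := by simp
  smul_mem' c f hf q := by simp only [Pi.smul_apply, smul_eq_mul]; linear_combination c * hf q

variable {K i j}

theorem eq_zero_of_mem_recSub {f : ℕ → K} (hf : f ∈ recSub K i j) (h0 : f 0 = 0)
    (hi : f (i + 1) = 0) : f = 0 := by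
  suffices ∀ q, f q = 0 from funext this
  intro q
  induction q with
  | zero => exact h0
  | succ q ih =>
    rcases eq_or_ne q i with rfl | hqi
    · exact hi
    · have hq : ((q : K) - i) ≠ 0 := sub_ne_zero.2 (Nat.cast_injective.ne hqi)
      have := hf q
      rw [ih, mul_zero] at this
      exact (mul_eq_zero.1 this.symm).resolve_left hq

variable (K i j)

/-- For `q > i` the product contains the factor `(i - j) / 0 = 0`, so this solution vanishes
past `i`. -/
def recSolZero (q : ℕ) : K := ∏ k ∈ range q, ((k : K) - j) / ((k : K) - i)

def recSolOne (q : ℕ) : K :=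
  if i < q then ∏ k ∈ Ico (i + 1) q, ((k : K) - j) / ((k : K) - i) else 0

variable {K i j}

theorem recSolZero_mem_recSub (hji : j ≤ i) : recSolZero K i j ∈ recSub K i j := by
  intro q
  rw [recSolZero, recSolZero, prod_range_succ]
  rcases eq_or_ne q i with rfl | hqi
  · rcases hji.lt_or_eq with hlt | rfl
    · rw [prod_eq_zero (mem_range.2 hlt) (by simp)]
      simp
    · simp
  · have hq : ((q : K) - i) ≠ 0 := sub_ne_zero.2 (Nat.cast_injective.ne hqi)
    field_simp

theorem recSolOne_mem_recSub : recSolOne K i j ∈ recSub K i j := by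
  intro q
  unfold recSolOne
  rcases lt_trichotomy q i with hlt | rfl | hgt
  · rw [if_neg (by omega), if_neg (by omega)]
    simp
  · simp
  · rw [if_pos hgt, if_pos (by omega), prod_Ico_succ_top (by omega)]
    have hq : ((q : K) - i) ≠ 0 := sub_ne_zero.2 (Nat.cast_injective.ne hgt.ne')
    field_simp

theorem finrank_rowColSub_recSub (hji : j ≤ i) : finrank K (rowColSub (recSub K i j)) = 4 := by
  have hgp : ∀ a b : Fin 2, ![recSolZero K i j, recSolOne K i j] a (![0, i + 1] b) =
      if a = b then 1 else 0 := by
    intro a b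
    fin_cases a <;> fin_cases b <;> simp [recSolZero, recSolOne, prod_range_succ]
  rw [finrank_rowColSub ![0, i + 1] ![recSolZero K i j, recSolOne K i j]
    (fun f hf h => eq_zero_of_mem_recSub hf (h 0) (h 1))
    (fun a => by fin_cases a; exacts [recSolZero_mem_recSub hji, recSolOne_mem_recSub]) hgp]
  simp

end Recurrence

theorem diagFamSub_eq_rowColSub_recSub (n i j : ℕ) :
    diagFamSub n (-(n : ℂ) - 2 * (i : ℂ)) (-((n : ℂ) - 1) - 2 * (j : ℂ)) =
      rowColSub (recSub ℂ i j) := by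
  have key : ∀ (q : ℕ) (a b : ℂ),
      (-((n : ℂ) - 1) - 2 * (j : ℂ) + 2 * (q : ℂ) + (n : ℂ) - 1) * a =
        (-(n : ℂ) - 2 * (i : ℂ) + 2 * (q : ℂ) + (n : ℂ)) * b ↔
      ((q : ℂ) - j) * a = ((q : ℂ) - i) * b := fun q a b =>
    ⟨fun h => by linear_combination h / 2, fun h => by linear_combination 2 * h⟩
  ext s
  change IsDiagFam _ _ _ s ↔ _
  simp only [IsDiagFam, key, forall_and]
  exact and_congr forall_comm Iff.rfl

theorem statement14_general (n : ℕ) (i j : ℕ) (hji : j ≤ i) (r r' : ℂ)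
    (hr : r = -(n : ℂ) - 2*(i : ℂ)) (hr' : r' = -((n : ℂ) - 1) - 2*(j : ℂ)) :
    Module.finrank ℂ (diagFamSub n r r') = 4 := by
  subst hr hr'
  rw [diagFamSub_eq_rowColSub_recSub, finrank_rowColSub_recSub hji]

theorem statement14 (n : ℕ) (hn : 2 ≤ n) (i j : ℕ) (hji : j ≤ i) (r r' : ℂ)
    (hr : r = -(n : ℂ) - 2*(i : ℂ)) (hr' : r' = -((n : ℂ) - 1) - 2*(j : ℂ)) :
    Module.finrank ℂ (diagFamSub n r r') = 4 :=
  statement14_general n i j hji r r' hr hr'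

end
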